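/- arXiv:1704.05218 — 2 statements merged into one kernel-verified Lean document; each statement's English description precedes it below -/
import Mathlib

section
/- Let A be a nonsingular M-matrix with inverse A^{-1} = [α_{ij}], let B = [b_{ij}] ≥ 0, and suppose nonnegative numbers p_{ki} with 0 ≤ p_{ki} < 1 satisfy α_{ki} ≤ p_{ki} α_{ii} for all k ≠ i. Then ρ(B∘A^{-1}) ≤ max_{i≠j} (1/2){ b_{ii}α_{ii} + b_{jj}α_{jj} + [ (b_{ii}α_{ii} - b_{jj}α_{jj})² + 4 α_{ii}α_{jj} (Σ_{k≠i} b_{ki} p_{ki})(Σ_{k≠j} b_{kj} p_{kj}) ]^{1/2} }. -/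
/-!
Write `M = B ∘ A⁻¹ ≥ 0` and `C_i = ∑_{k ≠ i} m_ki`. Brauer's ovals of Cassini theorem, applied to
`Mᵀ`, gives for every eigenvalue `μ` indices `i ≠ j` with `|μ - m_ii| |μ - m_jj| ≤ C_i C_j`.
As `m_ii ≥ 0` we have `||μ| - m_ii| ≤ |μ - m_ii|`, and `α_ki ≤ p_ki α_ii` gives
`C_i ≤ c_i := α_ii ∑_{k ≠ i} b_ki p_ki`. Hence `|μ|` is at most the larger root of
`(x - m_ii)(x - m_jj) = c_i c_j`, which is the bound of the theorem.
-/

open Finset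

/-- The spectral radius of a real matrix: the supremum of the moduli of its complex
eigenvalues. -/
noncomputable def specRad {n : ℕ} (M : Matrix (Fin n) (Fin n) ℝ) : ℝ :=
  sSup ((fun z : ℂ => ‖z‖) '' spectrum ℂ (M.map Complex.ofReal))

theorem mul_le_mul_of_cross_le {a b x y R S : ℝ} (ha : 0 ≤ a) (hb : 0 ≤ b) (hR : 0 ≤ R)
    (hS : 0 ≤ S) (hx : 0 < x) (hy : 0 ≤ y) (hax : a * x ≤ y * R) (hby : b * y ≤ x * S) :
    a * b ≤ R * S := by
  rcases hy.eq_or_lt with rfl | hy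
  · have : a = 0 := by nlinarith
    simp [this, mul_nonneg hR hS]
  · refine le_of_mul_le_mul_right ?_ (mul_pos hx hy)
    nlinarith [mul_le_mul hax hby (mul_nonneg hb hy.le) (mul_nonneg hy.le hR)]

theorem max_le_half_add_add_sqrt (a b : ℝ) {T : ℝ} (hT : 0 ≤ T) :
    max a b ≤ 1 / 2 * (a + b + √((a - b) ^ 2 + 4 * T)) := by
  have h : |a - b| ≤ √((a - b) ^ 2 + 4 * T) := by
    rw [← Real.sqrt_sq_eq_abs]
    exact Real.sqrt_le_sqrt (by linarith)
  rcases le_total a b with hab | hab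
  · rw [max_eq_right hab]; linarith [neg_abs_le (a - b)]
  · rw [max_eq_left hab]; linarith [le_abs_self (a - b)]

/-- The right-hand side is the larger root of `(x - a) * (x - b) = T`. -/
theorem le_half_add_add_sqrt_of_abs_mul_abs_le {r a b T : ℝ} (h : |r - a| * |r - b| ≤ T) :
    r ≤ 1 / 2 * (a + b + √((a - b) ^ 2 + 4 * T)) := by
  have hT : 0 ≤ T := (mul_nonneg (abs_nonneg _) (abs_nonneg _)).trans h
  rcases le_or_gt r (max a b) with hr | hr
  · exact hr.trans (max_le_half_add_add_sqrt a b hT)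
  obtain ⟨ha, hb⟩ := max_lt_iff.mp hr
  rw [abs_of_pos (sub_pos.mpr ha), abs_of_pos (sub_pos.mpr hb)] at h
  have : 2 * r - a - b ≤ √((a - b) ^ 2 + 4 * T) :=
    Real.le_sqrt_of_sq_le (by nlinarith)
  linarith

namespace Matrix

variable {ι : Type*} [Fintype ι] [DecidableEq ι]

theorem mem_spectrum_transpose_iff {K : Type*} [Field K] {A : Matrix ι ι K} {μ : K} :
    μ ∈ spectrum K Aᵀ ↔ μ ∈ spectrum K A := by
  rw [mem_spectrum_iff_isRoot_charpoly, mem_spectrum_iff_isRoot_charpoly, charpoly_transpose]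

section NormedField

variable {K : Type*} [NormedField K] {A : Matrix ι ι K} {μ : K} {v : ι → K}

theorem norm_sub_diag_mul_le_of_mulVec_eq_smul (hv : A *ᵥ v = μ • v) (i : ι) {r : ℝ}
    (hr : ∀ k ∈ univ.erase i, ‖v k‖ ≤ r) :
    ‖μ - A i i‖ * ‖v i‖ ≤ r * ∑ k ∈ univ.erase i, ‖A i k‖ := by
  have hrow : (μ - A i i) * v i = ∑ k ∈ univ.erase i, A i k * v k := by
    rw [sub_mul, ← smul_eq_mul, ← Pi.smul_apply, ← hv, mulVec, dotProduct,
      ← add_sum_erase _ _ (mem_univ i), add_sub_cancel_left]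
  calc ‖μ - A i i‖ * ‖v i‖ = ‖∑ k ∈ univ.erase i, A i k * v k‖ := by rw [← norm_mul, hrow]
    _ ≤ ∑ k ∈ univ.erase i, ‖A i k‖ * r := by
      refine (norm_sum_le _ _).trans (sum_le_sum fun k hk => ?_)
      rw [norm_mul]
      exact mul_le_mul_of_nonneg_left (hr k hk) (norm_nonneg _)
    _ = r * ∑ k ∈ univ.erase i, ‖A i k‖ := by rw [← sum_mul, mul_comm]

theorem eigenvalue_mem_brauer_oval [Nontrivial ι] (hμ : Module.End.HasEigenvalue (toLin' A) μ) :
    ∃ i j, i ≠ j ∧ ‖μ - A i i‖ * ‖μ - A j j‖ ≤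
      (∑ k ∈ univ.erase i, ‖A i k‖) * ∑ k ∈ univ.erase j, ‖A j k‖ := by
  obtain ⟨v, hv, hv0⟩ := hμ.exists_hasEigenvector
  rw [Module.End.mem_eigenspace_iff, toLin'_apply] at hv
  -- `i` carries the largest `‖v k‖`, `j` the second largest.
  obtain ⟨i, -, hi⟩ := exists_max_image univ (fun k => ‖v k‖) univ_nonempty
  obtain ⟨j, hj, hj_max⟩ := exists_max_image (univ.erase i) (fun k => ‖v k‖)
    univ_nontrivial.erase_nonempty
  have hvi : 0 < ‖v i‖ := by
    obtain ⟨k, hk⟩ := Function.ne_iff.mp hv0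
    exact (norm_pos_iff.mpr hk).trans_le (hi k (mem_univ k))
  have hij := norm_sub_diag_mul_le_of_mulVec_eq_smul hv i hj_max
  have hji := norm_sub_diag_mul_le_of_mulVec_eq_smul hv j fun k _ => hi k (mem_univ k)
  exact ⟨i, j, (ne_of_mem_erase hj).symm, mul_le_mul_of_cross_le (norm_nonneg _)
    (norm_nonneg _) (sum_nonneg fun _ _ => norm_nonneg _) (sum_nonneg fun _ _ => norm_nonneg _)
    hvi (norm_nonneg _) hij hji⟩

end NormedField

theorem exists_norm_le_of_mem_spectrum_of_nonneg [Nontrivial ι] {M : Matrix ι ι ℝ}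
    (hM : ∀ i j, 0 ≤ M i j) {c : ι → ℝ}
    (hc : ∀ i, ∑ k ∈ univ.erase i, M k i ≤ c i) {μ : ℂ}
    (hμ : μ ∈ spectrum ℂ (M.map Complex.ofReal)) :
    ∃ i j, i ≠ j ∧ ‖μ‖ ≤ 1 / 2 * (M i i + M j j + √((M i i - M j j) ^ 2 + 4 * (c i * c j))) := by
  rw [← mem_spectrum_transpose_iff, ← spectrum_toLin',
    ← Module.End.hasEigenvalue_iff_mem_spectrum] at hμ
  obtain ⟨i, j, hij, hoval⟩ := eigenvalue_mem_brauer_oval hμ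
  have hnorm : ∀ k t, ‖(M.map Complex.ofReal)ᵀ t k‖ = M k t := fun k t => by
    rw [transpose_apply, map_apply, Complex.norm_real, Real.norm_of_nonneg (hM k t)]
  have hdist : ∀ t, |‖μ‖ - M t t| ≤ ‖μ - (M.map Complex.ofReal)ᵀ t t‖ := fun t =>
    hnorm t t ▸ abs_norm_sub_norm_le _ _
  have hcol_nonneg : ∀ t, 0 ≤ ∑ k ∈ univ.erase t, M k t := fun t =>
    sum_nonneg fun k _ => hM k t
  simp only [hnorm] at hoval
  refine ⟨i, j, hij, le_half_add_add_sqrt_of_abs_mul_abs_le ?_⟩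
  calc |‖μ‖ - M i i| * |‖μ‖ - M j j|
      ≤ ‖μ - (M.map Complex.ofReal)ᵀ i i‖ * ‖μ - (M.map Complex.ofReal)ᵀ j j‖ :=
        mul_le_mul (hdist i) (hdist j) (abs_nonneg _) (norm_nonneg _)
    _ ≤ (∑ k ∈ univ.erase i, M k i) * ∑ k ∈ univ.erase j, M k j := hoval
    _ ≤ c i * c j := mul_le_mul (hc i) (hc j) (hcol_nonneg j) ((hcol_nonneg i).trans (hc i))

end Matrix

theorem specRad_le_sup'_of_nonneg {n : ℕ} {M : Matrix (Fin n) (Fin n) ℝ} (hM : ∀ i j, 0 ≤ M i j)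
    {c : Fin n → ℝ} (hc : ∀ i, ∑ k ∈ univ.erase i, M k i ≤ c i)
    (hne : (univ.offDiag : Finset (Fin n × Fin n)).Nonempty) :
    specRad M ≤ univ.offDiag.sup' hne (fun q => 1 / 2 * (M q.1 q.1 + M q.2 q.2 +
      √((M q.1 q.1 - M q.2 q.2) ^ 2 + 4 * (c q.1 * c q.2)))) := by
  obtain ⟨q, hq⟩ := hne
  have : Nontrivial (Fin n) := ⟨⟨q.1, q.2, (mem_offDiag.mp hq).2.2⟩⟩
  refine Real.sSup_le ?_ ?_
  · rintro _ ⟨μ, hμ, rfl⟩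
    obtain ⟨i, j, hij, hμ_le⟩ := Matrix.exists_norm_le_of_mem_spectrum_of_nonneg hM hc hμ
    exact le_sup'_of_le _ (b := (i, j)) (mem_offDiag.mpr ⟨mem_univ i, mem_univ j, hij⟩) hμ_le
  · have hc_nonneg : ∀ i, 0 ≤ c i := fun i => (sum_nonneg fun k _ => hM k i).trans (hc i)
    exact le_sup'_of_le _ hq <| (hM q.1 q.1).trans <| (le_max_left _ _).trans <|
      max_le_half_add_add_sqrt _ _ (mul_nonneg (hc_nonneg q.1) (hc_nonneg q.2))

theorem specRad_hadamard_inv_le_general {n : ℕ}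
    (A B : Matrix (Fin n) (Fin n) ℝ)
    (hinv : ∀ i j, 0 ≤ A⁻¹ i j)
    (hB : ∀ i j, 0 ≤ B i j)
    (p : Fin n → Fin n → ℝ)
    (hpa : ∀ k i, k ≠ i → A⁻¹ k i ≤ p k i * A⁻¹ i i)
    (hne : (univ.offDiag : Finset (Fin n × Fin n)).Nonempty) :
    specRad (Matrix.hadamard B A⁻¹) ≤
      univ.offDiag.sup' hne (fun q =>
        (1 / 2) * (B q.1 q.1 * A⁻¹ q.1 q.1 + B q.2 q.2 * A⁻¹ q.2 q.2 +
          Real.sqrt ((B q.1 q.1 * A⁻¹ q.1 q.1 - B q.2 q.2 * A⁻¹ q.2 q.2) ^ 2 +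
            4 * A⁻¹ q.1 q.1 * A⁻¹ q.2 q.2 *
              (∑ k ∈ univ.erase q.1, B k q.1 * p k q.1) *
              (∑ k ∈ univ.erase q.2, B k q.2 * p k q.2)))) := by
  have hcol : ∀ t, ∑ k ∈ univ.erase t, Matrix.hadamard B A⁻¹ k t ≤
      A⁻¹ t t * ∑ k ∈ univ.erase t, B k t * p k t := fun t => by
    rw [mul_sum]
    refine sum_le_sum fun k hk => ?_
    calc B k t * A⁻¹ k t ≤ B k t * (p k t * A⁻¹ t t) :=
          mul_le_mul_of_nonneg_left (hpa k t (ne_of_mem_erase hk)) (hB k t)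
      _ = A⁻¹ t t * (B k t * p k t) := by ring
  refine (specRad_le_sup'_of_nonneg (fun i j => mul_nonneg (hB i j) (hinv i j)) hcol hne).trans_eq
    (sup'_congr hne rfl fun q _ => ?_)
  ring_nf

/-- Brauer-type bound for `ρ(B ∘ A⁻¹)` for an M-matrix `A` and a nonnegative matrix `B`,
given constants `p_ki` with `α_ki ≤ p_ki α_ii` for `k ≠ i`. -/
theorem specRad_hadamard_inv_le {n : ℕ} (hn : 2 ≤ n)
    (A B : Matrix (Fin n) (Fin n) ℝ)
    (hA : IsUnit A.det)
    (hoff : ∀ i j, i ≠ j → A i j ≤ 0)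
    (hinv : ∀ i j, 0 ≤ A⁻¹ i j)
    (hB : ∀ i j, 0 ≤ B i j)
    (p : Fin n → Fin n → ℝ)
    (hp0 : ∀ k i, k ≠ i → 0 ≤ p k i) (hp1 : ∀ k i, k ≠ i → p k i < 1)
    (hpa : ∀ k i, k ≠ i → A⁻¹ k i ≤ p k i * A⁻¹ i i)
    (hne : (univ.offDiag : Finset (Fin n × Fin n)).Nonempty) :
    specRad (Matrix.hadamard B A⁻¹) ≤
      univ.offDiag.sup' hne (fun q =>
        (1 / 2) * (B q.1 q.1 * A⁻¹ q.1 q.1 + B q.2 q.2 * A⁻¹ q.2 q.2 +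
          Real.sqrt ((B q.1 q.1 * A⁻¹ q.1 q.1 - B q.2 q.2 * A⁻¹ q.2 q.2) ^ 2 +
            4 * A⁻¹ q.1 q.1 * A⁻¹ q.2 q.2 *
              (∑ k ∈ univ.erase q.1, B k q.1 * p k q.1) *
              (∑ k ∈ univ.erase q.2, B k q.2 * p k q.2)))) :=
  specRad_hadamard_inv_le_general A B hinv hB p hpa hne
end

section
/- Let A be a nonsingular M-matrix with inverse [α_{ij}], and suppose 0 ≤ p_{ki} < 1 satisfy α_{ki} ≤ p_{ki} α_{ii} for all k ≠ i. Then the minimum eigenvalue τ(A) = 1/ρ(A^{-1}) satisfies τ(A) ≥ 2 / max_{i≠j}{ α_{ii} + α_{jj} + [ (α_{ii} - α_{jj})² + 4 α_{ii}α_{jj} (Σ_{k≠i} p_{ki})(Σ_{k≠j} p_{kj}) ]^{1/2} }. -/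
/-!
Every eigenvalue of `A⁻¹` is a left eigenvalue; comparing the two largest entries of a left
eigenvector in the two corresponding column equations puts it in a Brauer oval of Cassini
`|μ - α_ii| |μ - α_jj| ≤ R_i R_j` built from the off-diagonal column sums `R_i` of `A⁻¹`.
For a nonnegative matrix this bounds `|μ|` by the larger root of `(x - α_ii)(x - α_jj) = R_i R_j`,
and `R_i ≤ α_ii ∑_{k ≠ i} p_ki` turns this into the bound on `ρ(A⁻¹) = 1 / τ(A)`.
-/

open Finset

section Eigen

open Matrix

variable {K ι : Type*} [Field K] [Fintype ι] [DecidableEq ι]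

theorem Matrix.spectrum_nonempty_of_isAlgClosed [IsAlgClosed K] [Nonempty ι]
    (M : Matrix ι ι K) : (spectrum K M).Nonempty := by
  obtain ⟨μ, hμ⟩ := IsAlgClosed.exists_root M.charpoly
    (by rw [charpoly_degree_eq_dim]; exact_mod_cast Fintype.card_ne_zero)
  exact ⟨μ, mem_spectrum_of_isRoot_charpoly hμ⟩

theorem Matrix.exists_vecMul_eq_smul_of_mem_spectrum {M : Matrix ι ι K} {μ : K}
    (hμ : μ ∈ spectrum K M) : ∃ v ≠ 0, v ᵥ* M = μ • v := by
  rw [spectrum.mem_iff, isUnit_iff_isUnit_det, isUnit_iff_ne_zero, not_not] at hμ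
  obtain ⟨v, hv0, hv⟩ := exists_vecMul_eq_zero_iff.2 hμ
  refine ⟨v, hv0, ?_⟩
  rw [vecMul_sub, sub_eq_zero, algebraMap_eq_diagonal] at hv
  simpa [vecMul_diagonal, mul_comm, funext_iff, Pi.smul_apply] using hv.symm

end Eigen

section Brauer

open Matrix

variable {𝕜 ι : Type*} [NormedField 𝕜] [Fintype ι] [DecidableEq ι]
  {M : Matrix ι ι 𝕜} {μ : 𝕜} {v : ι → 𝕜}

theorem Matrix.norm_sub_diag_mul_le_of_vecMul_eq_smul (hv : v ᵥ* M = μ • v) (i : ι) {c : ℝ}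
    (hc : ∀ k ≠ i, ‖v k‖ ≤ c) :
    ‖μ - M i i‖ * ‖v i‖ ≤ c * ∑ k ∈ univ.erase i, ‖M k i‖ := by
  have hrow : (μ - M i i) * v i = ∑ k ∈ univ.erase i, v k * M k i := by
    have h := congrFun hv i
    rw [vecMul, dotProduct, ← sum_erase_add _ _ (mem_univ i), Pi.smul_apply, smul_eq_mul] at h
    linear_combination -h
  calc ‖μ - M i i‖ * ‖v i‖ = ‖∑ k ∈ univ.erase i, v k * M k i‖ := by rw [← norm_mul, hrow]
    _ ≤ ∑ k ∈ univ.erase i, ‖v k‖ * ‖M k i‖ := norm_sum_le_of_le _ fun k _ => norm_mul_le _ _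
    _ ≤ ∑ k ∈ univ.erase i, c * ‖M k i‖ := sum_le_sum fun k hk =>
      mul_le_mul_of_nonneg_right (hc k (ne_of_mem_erase hk)) (norm_nonneg _)
    _ = c * ∑ k ∈ univ.erase i, ‖M k i‖ := (mul_sum _ _ _).symm

/-- Brauer's ovals of Cassini theorem, for column sums. -/
theorem Matrix.exists_norm_sub_mul_norm_sub_le_of_vecMul_eq_smul [Nontrivial ι] (hv0 : v ≠ 0)
    (hv : v ᵥ* M = μ • v) :
    ∃ i j, i ≠ j ∧ ‖μ - M i i‖ * ‖μ - M j j‖ ≤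
      (∑ k ∈ univ.erase i, ‖M k i‖) * ∑ k ∈ univ.erase j, ‖M k j‖ := by
  -- `i` carries the largest entry of `v` in modulus and `j` the largest of the others.
  obtain ⟨i, -, hi⟩ := exists_max_image univ (fun k => ‖v k‖) univ_nonempty
  obtain ⟨j, hj_mem, hj⟩ := exists_max_image (univ.erase i) (fun k => ‖v k‖)
    (let ⟨k, hk⟩ := exists_ne i; ⟨k, mem_erase.2 ⟨hk, mem_univ k⟩⟩)
  have hvi : 0 < ‖v i‖ := by
    obtain ⟨k, hk⟩ := Function.ne_iff.mp hv0
    exact (norm_pos_iff.2 hk).trans_le (hi k (mem_univ k))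
  refine ⟨i, j, (ne_of_mem_erase hj_mem).symm, ?_⟩
  have hcol_i := M.norm_sub_diag_mul_le_of_vecMul_eq_smul hv i fun k hk =>
    hj k (mem_erase.2 ⟨hk, mem_univ k⟩)
  have hcol_j := M.norm_sub_diag_mul_le_of_vecMul_eq_smul hv j fun k _ => hi k (mem_univ k)
  rcases (norm_nonneg (v j)).eq_or_lt with hvj | hvj
  · have hμi : ‖μ - M i i‖ = 0 := by
      rw [← hvj, zero_mul] at hcol_i
      exact (nonpos_of_mul_nonpos_left hcol_i hvi).antisymm (norm_nonneg _)
    rw [hμi, zero_mul]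
    exact mul_nonneg (sum_nonneg fun _ _ => norm_nonneg _) (sum_nonneg fun _ _ => norm_nonneg _)
  · refine le_of_mul_le_mul_right ?_ (mul_pos hvi hvj)
    calc ‖μ - M i i‖ * ‖μ - M j j‖ * (‖v i‖ * ‖v j‖)
        = (‖μ - M i i‖ * ‖v i‖) * (‖μ - M j j‖ * ‖v j‖) := by ring
      _ ≤ (‖v j‖ * ∑ k ∈ univ.erase i, ‖M k i‖) * (‖v i‖ * ∑ k ∈ univ.erase j, ‖M k j‖) :=
        mul_le_mul hcol_i hcol_j (by positivity) (by positivity)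
      _ = _ := by ring

end Brauer

theorem Complex.norm_le_of_norm_sub_mul_norm_sub_le {μ : ℂ} {a b r : ℝ} (ha : 0 ≤ a)
    (hb : 0 ≤ b) (h : ‖μ - a‖ * ‖μ - b‖ ≤ r) :
    ‖μ‖ ≤ (a + b + √((a - b) ^ 2 + 4 * r)) / 2 := by
  have hr : 0 ≤ r := (mul_nonneg (norm_nonneg _) (norm_nonneg _)).trans h
  set s := √((a - b) ^ 2 + 4 * r)
  have hs : s ^ 2 = (a - b) ^ 2 + 4 * r := Real.sq_sqrt (by positivity)
  obtain ⟨hab, hba⟩ := abs_le.1 (Real.abs_le_sqrt (by linarith) : |a - b| ≤ s)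
  have hμa : ‖μ‖ - a ≤ ‖μ - a‖ := by
    simpa [Complex.norm_real, abs_of_nonneg ha] using norm_sub_norm_le μ (a : ℂ)
  have hμb : ‖μ‖ - b ≤ ‖μ - b‖ := by
    simpa [Complex.norm_real, abs_of_nonneg hb] using norm_sub_norm_le μ (b : ℂ)
  by_contra! hμ
  have hsa : 0 ≤ (s + b - a) / 2 := by linarith
  have hsb : 0 ≤ (s + a - b) / 2 := by linarith
  -- `(a + b + s) / 2` is the larger root of `(x - a) (x - b) = r`.
  have : r < (‖μ‖ - a) * (‖μ‖ - b) :=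
    calc r = (s + b - a) / 2 * ((s + a - b) / 2) := by linear_combination (-1 / 4) * hs
      _ < (‖μ‖ - a) * (‖μ‖ - b) := mul_lt_mul'' (by linarith) (by linarith) hsa hsb
  have := mul_le_mul hμa hμb (by linarith) (norm_nonneg _)
  linarith

theorem Matrix.exists_ne_norm_le_of_nonneg_of_mem_spectrum {ι : Type*} [Fintype ι]
    [DecidableEq ι] [Nontrivial ι] {B : Matrix ι ι ℝ} (hB : ∀ i j, 0 ≤ B i j) {μ : ℂ}
    (hμ : μ ∈ spectrum ℂ (B.map Complex.ofReal)) :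
    ∃ i j, i ≠ j ∧ ‖μ‖ ≤ (B i i + B j j + √((B i i - B j j) ^ 2 +
        4 * ((∑ k ∈ univ.erase i, B k i) * ∑ k ∈ univ.erase j, B k j))) / 2 := by
  obtain ⟨v, hv0, hv⟩ := Matrix.exists_vecMul_eq_smul_of_mem_spectrum hμ
  obtain ⟨i, j, hij, hcassini⟩ := Matrix.exists_norm_sub_mul_norm_sub_le_of_vecMul_eq_smul hv0 hv
  simp only [Matrix.map_apply, Complex.norm_real, Real.norm_of_nonneg (hB _ _)] at hcassini
  exact ⟨i, j, hij, Complex.norm_le_of_norm_sub_mul_norm_sub_le (hB i i) (hB j j) hcassini⟩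

theorem norm_le_specRad {n : ℕ} (M : Matrix (Fin n) (Fin n) ℝ) {μ : ℂ}
    (hμ : μ ∈ spectrum ℂ (M.map Complex.ofReal)) : ‖μ‖ ≤ specRad M :=
  le_csSup ((Matrix.finite_spectrum _).image _).bddAbove ⟨μ, hμ, rfl⟩

theorem specRad_le {n : ℕ} [Nonempty (Fin n)] (M : Matrix (Fin n) (Fin n) ℝ) {c : ℝ}
    (h : ∀ μ ∈ spectrum ℂ (M.map Complex.ofReal), ‖μ‖ ≤ c) : specRad M ≤ c :=
  csSup_le ((M.map Complex.ofReal).spectrum_nonempty_of_isAlgClosed.image _)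
    (by rintro - ⟨μ, hμ, rfl⟩; exact h μ hμ)

theorem specRad_pos {n : ℕ} [Nonempty (Fin n)] {M : Matrix (Fin n) (Fin n) ℝ}
    (hM : IsUnit M.det) : 0 < specRad M := by
  obtain ⟨μ, hμ⟩ := (M.map Complex.ofReal).spectrum_nonempty_of_isAlgClosed
  have hμ0 : μ ≠ 0 := by
    rintro rfl
    refine spectrum.zero_notMem_iff ℂ |>.2 ?_ hμ
    rw [Matrix.isUnit_iff_isUnit_det]
    exact Complex.ofRealHom.map_det M ▸ hM.map Complex.ofRealHom
  exact (norm_pos_iff.2 hμ0).trans_le (norm_le_specRad M hμ)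

theorem two_div_le_one_div_specRad {n : ℕ} [Nonempty (Fin n)] {M : Matrix (Fin n) (Fin n) ℝ}
    (hM : IsUnit M.det) {c : ℝ} (h : ∀ μ ∈ spectrum ℂ (M.map Complex.ofReal), 2 * ‖μ‖ ≤ c) :
    2 / c ≤ 1 / specRad M := by
  have hle : specRad M ≤ c / 2 := specRad_le M fun μ hμ => by linarith [h μ hμ]
  simpa only [one_div_div] using one_div_le_one_div_of_le (specRad_pos hM) hle

theorem tau_lower_bound_brauer_general {n : ℕ}
    (A : Matrix (Fin n) (Fin n) ℝ)
    (hA : IsUnit A.det)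
    (hinv : ∀ i j, 0 ≤ A⁻¹ i j)
    (p : Fin n → Fin n → ℝ)
    (hp0 : ∀ k i, k ≠ i → 0 ≤ p k i)
    (hpa : ∀ k i, k ≠ i → A⁻¹ k i ≤ p k i * A⁻¹ i i)
    (hne : (univ.offDiag : Finset (Fin n × Fin n)).Nonempty) :
    2 / (univ.offDiag.sup' hne (fun q =>
        A⁻¹ q.1 q.1 + A⁻¹ q.2 q.2 +
          Real.sqrt ((A⁻¹ q.1 q.1 - A⁻¹ q.2 q.2) ^ 2 +
            4 * A⁻¹ q.1 q.1 * A⁻¹ q.2 q.2 *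
              (∑ k ∈ univ.erase q.1, p k q.1) * (∑ k ∈ univ.erase q.2, p k q.2)))) ≤
      1 / specRad A⁻¹ := by
  obtain ⟨⟨i₀, j₀⟩, hq⟩ := hne
  have : Nontrivial (Fin n) := ⟨⟨i₀, j₀, (mem_offDiag.1 hq).2.2⟩⟩
  have hcol : ∀ i, ∑ k ∈ univ.erase i, A⁻¹ k i ≤ (∑ k ∈ univ.erase i, p k i) * A⁻¹ i i :=
    fun i => by
      rw [sum_mul]
      exact sum_le_sum fun k hk => hpa k i (ne_of_mem_erase hk)
  refine two_div_le_one_div_specRad (A.isUnit_nonsing_inv_det hA) fun μ hμ => ?_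
  obtain ⟨i, j, hij, hμ⟩ := Matrix.exists_ne_norm_le_of_nonneg_of_mem_spectrum hinv hμ
  refine le_sup'_of_le _ (b := (i, j)) (mem_offDiag.2 ⟨mem_univ i, mem_univ j, hij⟩) ?_
  have hcols : (∑ k ∈ univ.erase i, A⁻¹ k i) * ∑ k ∈ univ.erase j, A⁻¹ k j ≤
      ((∑ k ∈ univ.erase i, p k i) * A⁻¹ i i) * ((∑ k ∈ univ.erase j, p k j) * A⁻¹ j j) :=
    mul_le_mul (hcol i) (hcol j) (sum_nonneg fun k _ => hinv k j)
      (mul_nonneg (sum_nonneg fun k hk => hp0 k i (ne_of_mem_erase hk)) (hinv i i))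
  have hsqrt : √((A⁻¹ i i - A⁻¹ j j) ^ 2 +
        4 * ((∑ k ∈ univ.erase i, A⁻¹ k i) * ∑ k ∈ univ.erase j, A⁻¹ k j)) ≤
      √((A⁻¹ i i - A⁻¹ j j) ^ 2 + 4 * A⁻¹ i i * A⁻¹ j j *
        (∑ k ∈ univ.erase i, p k i) * ∑ k ∈ univ.erase j, p k j) :=
    Real.sqrt_le_sqrt (by linarith)
  dsimp only
  linarith

/-- Lower bound for the minimum eigenvalue `τ(A) = 1/ρ(A⁻¹)` of an `M`-matrix `A`:
`τ(A) ≥ 2 / max_{i≠j} { α_ii + α_jj + √((α_ii-α_jj)² + 4 α_ii α_jj (∑_{k≠i}p_ki)(∑_{k≠j}p_kj)) }`. -/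
theorem tau_lower_bound_brauer {n : ℕ} (hn : 2 ≤ n)
    (A : Matrix (Fin n) (Fin n) ℝ)
    (hA : IsUnit A.det)
    (hoff : ∀ i j, i ≠ j → A i j ≤ 0)
    (hinv : ∀ i j, 0 ≤ A⁻¹ i j)
    (p : Fin n → Fin n → ℝ)
    (hp0 : ∀ k i, k ≠ i → 0 ≤ p k i) (hp1 : ∀ k i, k ≠ i → p k i < 1)
    (hpa : ∀ k i, k ≠ i → A⁻¹ k i ≤ p k i * A⁻¹ i i)
    (hne : (univ.offDiag : Finset (Fin n × Fin n)).Nonempty) :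
    2 / (univ.offDiag.sup' hne (fun q =>
        A⁻¹ q.1 q.1 + A⁻¹ q.2 q.2 +
          Real.sqrt ((A⁻¹ q.1 q.1 - A⁻¹ q.2 q.2) ^ 2 +
            4 * A⁻¹ q.1 q.1 * A⁻¹ q.2 q.2 *
              (∑ k ∈ univ.erase q.1, p k q.1) * (∑ k ∈ univ.erase q.2, p k q.2)))) ≤
      1 / specRad A⁻¹ :=
  tau_lower_bound_brauer_general A hA hinv p hp0 hpa hne
end
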